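/- Let U ⊆ ℝ³ be open and let u, v : ℝ³ → ℝ be smooth. Define on U: F := −(u + (u_x² + u_y)·v_x), G := −(u_x·v_x + x) (x being the second coordinate function on ℝ³), R := v_t − F, S := v_y − G, and E := u_tx + (−u_x² + u_y)·u_xx − 3·u_x·u_xy − u_yy. Then the identity ∂_y R − ∂_t S − (u_x² + u_y)·∂_x S + u_x·∂_x R = −v_x·E holds at every point of U. -/

import Mathlib

/-- Partial derivative with respect to the first coordinate `t` of `(t,x,y) : ℝ × ℝ × ℝ`. -/
noncomputable def pd_t (f : ℝ × ℝ × ℝ → ℝ) (p : ℝ × ℝ × ℝ) : ℝ :=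
  deriv (fun s => f (s, p.2.1, p.2.2)) p.1

/-- Partial derivative with respect to the second coordinate `x`. -/
noncomputable def pd_x (f : ℝ × ℝ × ℝ → ℝ) (p : ℝ × ℝ × ℝ) : ℝ :=
  deriv (fun s => f (p.1, s, p.2.2)) p.2.1

/-- Partial derivative with respect to the third coordinate `y`. -/
noncomputable def pd_y (f : ℝ × ℝ × ℝ → ℝ) (p : ℝ × ℝ × ℝ) : ℝ :=
  deriv (fun s => f (p.1, p.2.1, s)) p.2.2

lemma pd_t_eq (f : ℝ × ℝ × ℝ → ℝ) (p : ℝ × ℝ × ℝ) (hf : DifferentiableAt ℝ f p) :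
    pd_t f p = fderiv ℝ f p (1, 0, 0) := by
  obtain ⟨t, x, y⟩ := p
  have hg : HasDerivAt (fun s : ℝ => (s, x, y)) ((1:ℝ), (0:ℝ), (0:ℝ)) t :=
    (hasDerivAt_id t).prodMk ((hasDerivAt_const t x).prodMk (hasDerivAt_const t y))
  exact (hf.hasFDerivAt.comp_hasDerivAt t hg).deriv

lemma pd_x_eq (f : ℝ × ℝ × ℝ → ℝ) (p : ℝ × ℝ × ℝ) (hf : DifferentiableAt ℝ f p) :
    pd_x f p = fderiv ℝ f p (0, 1, 0) := by
  obtain ⟨t, x, y⟩ := p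
  have hg : HasDerivAt (fun s : ℝ => (t, s, y)) ((0:ℝ), (1:ℝ), (0:ℝ)) x :=
    (hasDerivAt_const x t).prodMk ((hasDerivAt_id x).prodMk (hasDerivAt_const x y))
  exact (hf.hasFDerivAt.comp_hasDerivAt x hg).deriv

lemma pd_y_eq (f : ℝ × ℝ × ℝ → ℝ) (p : ℝ × ℝ × ℝ) (hf : DifferentiableAt ℝ f p) :
    pd_y f p = fderiv ℝ f p (0, 0, 1) := by
  obtain ⟨t, x, y⟩ := p
  have hg : HasDerivAt (fun s : ℝ => (t, x, s)) ((0:ℝ), (0:ℝ), (1:ℝ)) y :=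
    (hasDerivAt_const y t).prodMk ((hasDerivAt_const y x).prodMk (hasDerivAt_id y))
  exact (hf.hasFDerivAt.comp_hasDerivAt y hg).deriv

lemma key (u v : ℝ × ℝ × ℝ → ℝ) (hu : ContDiff ℝ (⊤ : ℕ∞) u) (hv : ContDiff ℝ (⊤ : ℕ∞) v) (p : ℝ × ℝ × ℝ) :
    pd_y (fun q => pd_t v q - (-(u q + ((pd_x u q) ^ 2 + pd_y u q) * pd_x v q))) p
      - pd_t (fun q => pd_y v q - (-(pd_x u q * pd_x v q + q.2.1))) p
      - ((pd_x u p) ^ 2 + pd_y u p) *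
        pd_x (fun q => pd_y v q - (-(pd_x u q * pd_x v q + q.2.1))) p
      + pd_x u p * pd_x (fun q => pd_t v q - (-(u q + ((pd_x u q) ^ 2 + pd_y u q) * pd_x v q))) p
    = -(pd_x v p) *
        (pd_t (pd_x u) p + (-(pd_x u p) ^ 2 + pd_y u p) * pd_x (pd_x u) p
          - 3 * pd_x u p * pd_y (pd_x u) p - pd_y (pd_y u) p) := by
  have hud : Differentiable ℝ u := hu.differentiable (by simp)
  have hvd : Differentiable ℝ v := hv.differentiable (by simp)
  have hu' : ContDiff ℝ (⊤ : ℕ∞) (fderiv ℝ u) :=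
    (contDiff_infty_iff_fderiv.mp (hu.of_le (by simp))).2
  have hv' : ContDiff ℝ (⊤ : ℕ∞) (fderiv ℝ v) :=
    (contDiff_infty_iff_fderiv.mp (hv.of_le (by simp))).2
  set A := fderiv ℝ u with hA
  set B := fderiv ℝ v with hB
  set e1 : ℝ × ℝ × ℝ := (1, 0, 0) with he1
  set e2 : ℝ × ℝ × ℝ := (0, 1, 0) with he2
  set e3 : ℝ × ℝ × ℝ := (0, 0, 1) with he3
  have hHu : HasFDerivAt A (fderiv ℝ A p) p := (hu'.differentiable (by simp) p).hasFDerivAt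
  have hHv : HasFDerivAt B (fderiv ℝ B p) p := (hv'.differentiable (by simp) p).hasFDerivAt
  set Hu := fderiv ℝ A p with hHu'
  set Hv := fderiv ℝ B p with hHv'
  -- component derivatives
  have hB1 := hHv.clm_apply (hasFDerivAt_const e1 p)
  have hB2 := hHv.clm_apply (hasFDerivAt_const e2 p)
  have hB3 := hHv.clm_apply (hasFDerivAt_const e3 p)
  have hA2 := hHu.clm_apply (hasFDerivAt_const e2 p)
  have hA3 := hHu.clm_apply (hasFDerivAt_const e3 p)
  have hup : HasFDerivAt u (A p) p := (hud p).hasFDerivAt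
  have hx2 : HasFDerivAt (fun q : ℝ × ℝ × ℝ => q.2.1)
      ((ContinuousLinearMap.fst ℝ ℝ ℝ).comp (ContinuousLinearMap.snd ℝ ℝ (ℝ × ℝ))) p :=
    hasFDerivAt_snd.fst
  have hRf : HasFDerivAt (fun q => B q e1 + (u q + (A q e2 * A q e2 + A q e3) * B q e2)) _ p := hB1.add (hup.add (((hA2.mul hA2).add hA3).mul hB2))
  have hSf : HasFDerivAt (fun q => B q e3 + (A q e2 * B q e2 + q.2.1)) _ p := hB3.add ((hA2.mul hB2).add hx2)
  -- rewrite the big lambdas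
  have hRfun : (fun q => pd_t v q - (-(u q + ((pd_x u q) ^ 2 + pd_y u q) * pd_x v q)))
      = fun q => B q e1 + (u q + (A q e2 * A q e2 + A q e3) * B q e2) := by
    funext q
    rw [pd_t_eq v q (hvd q), pd_x_eq u q (hud q), pd_y_eq u q (hud q), pd_x_eq v q (hvd q)]
    ring
  have hSfun : (fun q => pd_y v q - (-(pd_x u q * pd_x v q + q.2.1)))
      = fun q => B q e3 + (A q e2 * B q e2 + q.2.1) := by
    funext q
    rw [pd_y_eq v q (hvd q), pd_x_eq u q (hud q), pd_x_eq v q (hvd q)]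
    ring
  have hpux : pd_x u = fun q => A q e2 := funext fun q => pd_x_eq u q (hud q)
  have hpuy : pd_y u = fun q => A q e3 := funext fun q => pd_y_eq u q (hud q)
  rw [hRfun, hSfun, hpux, hpuy, pd_x_eq v p (hvd p),
    pd_y_eq _ p hRf.differentiableAt, pd_x_eq _ p hRf.differentiableAt,
    pd_t_eq _ p hSf.differentiableAt, pd_x_eq _ p hSf.differentiableAt,
    pd_t_eq _ p hA2.differentiableAt, pd_x_eq _ p hA2.differentiableAt,
    pd_y_eq _ p hA2.differentiableAt, pd_y_eq _ p hA3.differentiableAt,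
    hRf.fderiv, hSf.fderiv, hA2.fderiv, hA3.fderiv]
  have symu := second_derivative_symmetric (f := u) (fun y => (hud y).hasFDerivAt) hHu
  have symv := second_derivative_symmetric (f := v) (fun y => (hvd y).hasFDerivAt) hHv
  simp only [ContinuousLinearMap.add_apply, ContinuousLinearMap.comp_apply,
    ContinuousLinearMap.flip_apply, ContinuousLinearMap.smul_apply,
    ContinuousLinearMap.zero_apply, smul_eq_mul, ContinuousLinearMap.comp_zero,
    ContinuousLinearMap.zero_comp, ContinuousLinearMap.coe_fst', ContinuousLinearMap.coe_snd',
    he1, he2, he3, Pi.add_apply, Pi.mul_apply]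
  set a2 := A p e2
  set a3 := A p e3
  set b2 := B p e2
  simp only [zero_add]
  rw [symv ((0:ℝ),(0:ℝ),(1:ℝ)) ((1:ℝ),(0:ℝ),(0:ℝ)), symv ((0:ℝ),(0:ℝ),(1:ℝ)) ((0:ℝ),(1:ℝ),(0:ℝ)),
    symv ((0:ℝ),(1:ℝ),(0:ℝ)) ((1:ℝ),(0:ℝ),(0:ℝ)), symu ((0:ℝ),(0:ℝ),(1:ℝ)) ((0:ℝ),(1:ℝ),(0:ℝ))]
  ring

/-- compatibility identity for the covering (42) (case κ = −3). -/
theorem covering_WE5_identity (U : Set (ℝ × ℝ × ℝ)) (hU : IsOpen U)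
    (u v : ℝ × ℝ × ℝ → ℝ) (hu : ContDiff ℝ (⊤ : ℕ∞) u) (hv : ContDiff ℝ (⊤ : ℕ∞) v) :
    let F : ℝ × ℝ × ℝ → ℝ := fun q => -(u q + ((pd_x u q) ^ 2 + pd_y u q) * pd_x v q)
    let G : ℝ × ℝ × ℝ → ℝ := fun q => -(pd_x u q * pd_x v q + q.2.1)
    let R : ℝ × ℝ × ℝ → ℝ := fun q => pd_t v q - F q
    let S : ℝ × ℝ × ℝ → ℝ := fun q => pd_y v q - G q
    let E : ℝ × ℝ × ℝ → ℝ := fun q =>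
      pd_t (pd_x u) q
      + (-(pd_x u q) ^ 2 + pd_y u q) * pd_x (pd_x u) q
      - 3 * pd_x u q * pd_y (pd_x u) q - pd_y (pd_y u) q
    ∀ p ∈ U,
      pd_y R p - pd_t S p
      - ((pd_x u p) ^ 2 + pd_y u p) * pd_x S p
      + pd_x u p * pd_x R p
      = -(pd_x v p) * E p := by
  intro F G R S E p hp
  exact key u v hu hv p
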